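/- arXiv:1602.02889 — 7 statements merged into one kernel-verified Lean document; each statement's English description precedes it below -/
import Mathlib

section
/- Let P be a transition kernel on a pseudometric space (E,d) such that for every ε > 0 there exists r > 0 with P(x, B_r(x)) > 1 − ε for all x ∈ E. Then every small set for P is bounded. -/
/-!
Choose `r` so that one step of `P` leaves `B_r(x)` with probability at most `δ / (3k)`. By the
triangle inequality, `k` steps leave the closed ball of radius `k r` around the starting point with
probability at most `δ / 3`, so the minorization `δ ν ≤ P^k(x, ·)` forces
`ν(closedBall x (k r))ᶜ ≤ 1 / 3` for every `x ∈ C`. Two such balls therefore cannot be disjoint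
under the probability measure `ν`, and any two points of `C` are within distance `2 k r`.
-/

open MeasureTheory ProbabilityTheory

/-- The `k`-step kernel `P^k`. -/
noncomputable def iterKernel {E : Type*} [MeasurableSpace E] (P : Kernel E E) : ℕ → Kernel E E
  | 0 => Kernel.id
  | n + 1 => P ∘ₖ iterKernel P n

/-- `C` is a small set for `P`: `P^k(x,·) ≥ δ ν` on `C` for some `k ≥ 1`, `δ ∈ (0,1)` and a
probability measure `ν`. -/
def IsSmallSet {E : Type*} [MeasurableSpace E] (P : Kernel E E) (C : Set E) : Prop :=
  ∃ (k : ℕ) (δ : ℝ) (ν : Measure E), 1 ≤ k ∧ δ ∈ Set.Ioo (0:ℝ) 1 ∧ IsProbabilityMeasure ν ∧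
    ∀ x ∈ C, ∀ A : Set E, MeasurableSet A → ENNReal.ofReal δ * ν A ≤ iterKernel P k x A

open Metric
open scoped ENNReal

instance iterKernel.isMarkovKernel {E : Type*} [MeasurableSpace E] (P : Kernel E E)
    [IsMarkovKernel P] (n : ℕ) : IsMarkovKernel (iterKernel P n) := by
  induction n with
  | zero => rw [iterKernel]; infer_instance
  | succ n ih => rw [iterKernel]; infer_instance

section PseudoMetric

variable {E : Type*} [PseudoMetricSpace E]

theorem compl_closedBall_subset_compl_ball {x y : E} {r R : ℝ} (hy : y ∈ closedBall x R) :
    (closedBall x (R + r))ᶜ ⊆ (ball y r)ᶜ :=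
  Set.compl_subset_compl.2 <| ball_subset_closedBall.trans <|
    closedBall_subset_closedBall' (by rw [mem_closedBall] at hy; linarith)

variable [MeasurableSpace E]

theorem iterKernel_compl_closedBall_le [OpensMeasurableSpace E] (P : Kernel E E)
    [IsMarkovKernel P] {r : ℝ} {ε : ℝ≥0∞} (h : ∀ x, P x (ball x r)ᶜ ≤ ε) (n : ℕ) (x : E) :
    iterKernel P n x (closedBall x (n * r))ᶜ ≤ n * ε := by
  induction n generalizing x with
  | zero =>
    rw [iterKernel, Kernel.id_apply, Measure.dirac_apply' _ isClosed_closedBall.measurableSet.compl]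
    simp
  | succ n ih =>
    set B := closedBall x (n * r)
    have hradius : ((n + 1 : ℕ) : ℝ) * r = n * r + r := by push_cast; ring
    have hstep : ∀ y, P y (closedBall x ((n + 1 : ℕ) * r))ᶜ ≤ ε + Bᶜ.indicator 1 y := by
      intro y
      by_cases hy : y ∈ B
      · rw [hradius]
        exact (measure_mono (compl_closedBall_subset_compl_ball hy)).trans (h y) |>.trans
          le_self_add
      · simpa [hy] using prob_le_one.trans le_add_self
    calc iterKernel P (n + 1) x (closedBall x ((n + 1 : ℕ) * r))ᶜ
        = ∫⁻ y, P y (closedBall x ((n + 1 : ℕ) * r))ᶜ ∂(iterKernel P n x) :=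
          Kernel.comp_apply' _ _ _ isClosed_closedBall.measurableSet.compl
      _ ≤ ∫⁻ y, ε + Bᶜ.indicator 1 y ∂(iterKernel P n x) := lintegral_mono hstep
      _ = ε + iterKernel P n x Bᶜ := by
          rw [lintegral_add_left measurable_const, lintegral_const, measure_univ, mul_one,
            lintegral_indicator_one isClosed_closedBall.measurableSet.compl]
      _ ≤ ε + n * ε := by gcongr; exact ih x
      _ = (n + 1 : ℕ) * ε := by push_cast; ring

theorem closedBall_inter_nonempty_of_measure_compl_lt (ν : Measure E) [IsProbabilityMeasure ν]
    {x y : E} {R : ℝ} (hx : ν (closedBall x R)ᶜ < 2⁻¹) (hy : ν (closedBall y R)ᶜ < 2⁻¹) :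
    (closedBall x R ∩ closedBall y R).Nonempty := by
  by_contra hdisj
  have hcover : (Set.univ : Set E) = (closedBall x R)ᶜ ∪ (closedBall y R)ᶜ := by
    rw [← Set.compl_inter, Set.not_nonempty_iff_eq_empty.1 hdisj, Set.compl_empty]
  have : ν Set.univ < 1 := by
    calc ν Set.univ ≤ ν (closedBall x R)ᶜ + ν (closedBall y R)ᶜ :=
          hcover ▸ measure_union_le _ _
      _ < 2⁻¹ + 2⁻¹ := ENNReal.add_lt_add hx hy
      _ = 1 := ENNReal.inv_two_add_inv_two
  exact this.ne measure_univ

theorem isBounded_of_measure_compl_closedBall_lt (ν : Measure E) [IsProbabilityMeasure ν]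
    {C : Set E} {R : ℝ} (h : ∀ x ∈ C, ν (closedBall x R)ᶜ < 2⁻¹) : Bornology.IsBounded C := by
  refine isBounded_iff.2 ⟨R + R, fun x hx y hy => ?_⟩
  obtain ⟨z, hxz, hyz⟩ := closedBall_inter_nonempty_of_measure_compl_lt ν (h x hx) (h y hy)
  rw [mem_closedBall] at hxz hyz
  linarith [dist_triangle_left x y z]

end PseudoMetric

/-- If a Markov kernel `P` on a pseudometric space satisfies the uniform local-move property
(`∀ ε > 0, ∃ r > 0, P(x, B_r(x)) > 1 − ε` for all `x`), then every small set is bounded. -/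
theorem smallSet_bounded_of_local_moves
    {E : Type*} [PseudoMetricSpace E] [MeasurableSpace E] [BorelSpace E]
    (P : Kernel E E) [IsMarkovKernel P]
    (hloc : ∀ ε : ℝ, 0 < ε → ∃ r : ℝ, 0 < r ∧
      ∀ x : E, 1 - ENNReal.ofReal ε < P x (Metric.ball x r))
    (C : Set E) (hC : IsSmallSet P C) :
    Bornology.IsBounded C := by
  obtain ⟨k, δ, ν, hk, ⟨hδ0, -⟩, hν, hminor⟩ := hC
  have hk0 : (0 : ℝ) < k := by exact_mod_cast hk
  obtain ⟨r, -, hr⟩ := hloc (δ / (3 * k)) (by positivity)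
  have hstep : ∀ x, P x (ball x r)ᶜ ≤ ENNReal.ofReal (δ / (3 * k)) := fun x => by
    rw [prob_compl_eq_one_sub measurableSet_ball, tsub_le_iff_tsub_le]
    exact (hr x).le
  have hkε : (k : ℝ≥0∞) * ENNReal.ofReal (δ / (3 * k)) = ENNReal.ofReal δ * 3⁻¹ := by
    have hreal : k * (δ / (3 * k)) = δ * 3⁻¹ := by field_simp
    rw [← ENNReal.ofReal_natCast, ← ENNReal.ofReal_mul (by positivity), hreal,
      ENNReal.ofReal_mul hδ0.le, ENNReal.ofReal_inv_of_pos (by norm_num), ENNReal.ofReal_ofNat]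
  refine isBounded_of_measure_compl_closedBall_lt ν (R := k * r) fun x hx => ?_
  have hle := (hminor x hx _ isClosed_closedBall.measurableSet.compl).trans
    (iterKernel_compl_closedBall_le P hstep k x)
  rw [hkε, ENNReal.mul_le_mul_iff_right (by simpa using hδ0) ENNReal.ofReal_ne_top] at hle
  exact hle.trans_lt (ENNReal.inv_lt_inv.2 (by norm_num))
end

section
/- Let P be a Π-invariant, Π-irreducible transition kernel satisfying a geometric drift condition PV ≤ γV + b·1_C with γ ∈ (0,1), b < ∞, C a small set, and V : E → [1,∞] with V < ∞ Π-a.s. Then there exists s > 1 such that the function x ↦ Σ_{n=0}^∞ s^n (I_{C^c} P)^n(x, E) is Π-integrable. -/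
open MeasureTheory ProbabilityTheory
open scoped ENNReal

/-- The total masses `(I_{Cᶜ}P)^n(x, E)` of the iterates of the kernel restricted (at the
source) to `Cᶜ`:  `g 0 x = 1` and `g (n+1) x = 1_{Cᶜ}(x) ∫ g n (y) P(x, dy)`. -/
noncomputable def restrictedIterMass {E : Type*} [MeasurableSpace E]
    (P : Kernel E E) (C : Set E) : ℕ → E → ℝ≥0∞
  | 0, _ => 1
  | n + 1, x => Cᶜ.indicator (fun x' => ∫⁻ y, restrictedIterMass P C n y ∂(P x')) x

/-!
Off `C` the drift condition reads `PV ≤ γ V`, so by induction `(I_{Cᶜ}P)ⁿ(x, E) ≤ γⁿ V x` and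
`Σ sⁿ (I_{Cᶜ}P)ⁿ(x, E) ≤ V x / (1 - sγ)` as soon as `sγ < 1`. It remains to see that `V` is
`Π`-integrable. Integrating the drift against the invariant `Π` gives `∫ V ≤ γ ∫ V + b`, which is
only useful once `∫ V < ∞`; truncating at a level `M` makes everything finite, and iterating the
truncated inequality `n` times gives `∫ min(V, M) ≤ ∫ min(γⁿ V, M) + b / (1 - γ)`, whose first
term vanishes as `n → ∞` because `V < ∞` `Π`-a.e.
-/

open Filter Topology

theorem min_add_le_min_add (u w M : ℝ≥0∞) : min (u + w) M ≤ min u M + w := by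
  rw [← min_add_add_right]
  exact min_le_min le_rfl le_self_add

theorem iSup_min_natCast (v : ℝ≥0∞) : ⨆ m : ℕ, min v (m : ℝ≥0∞) = v := by
  rw [← inf_iSup_eq]
  simp [ENNReal.iSup_natCast]

theorem lintegral_eq_iSup_lintegral_min_natCast {E : Type*} [MeasurableSpace E] {μ : Measure E}
    {f : E → ℝ≥0∞} (hf : Measurable f) :
    ∫⁻ x, f x ∂μ = ⨆ m : ℕ, ∫⁻ x, min (f x) (m : ℝ≥0∞) ∂μ := by
  have hmono : Monotone fun m : ℕ => fun x => min (f x) (m : ℝ≥0∞) :=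
    fun m n hmn x => min_le_min le_rfl (Nat.cast_le.mpr hmn)
  rw [← lintegral_iSup (fun m => hf.min measurable_const) hmono]
  simp only [iSup_min_natCast]

theorem lintegral_min_le_min_lintegral {E : Type*} [MeasurableSpace E] {ν : Measure E}
    [IsProbabilityMeasure ν] (f : E → ℝ≥0∞) (M : ℝ≥0∞) :
    ∫⁻ y, min (f y) M ∂ν ≤ min (∫⁻ y, f y ∂ν) M :=
  le_min (lintegral_mono fun y => min_le_left _ _)
    ((lintegral_mono fun y => min_le_right _ _).trans_eq (by simp))

section Drift

variable {E : Type*} [MeasurableSpace E] {P : Kernel E E} {μ : Measure E} {V : E → ℝ≥0∞}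
  {c b : ℝ≥0∞}

theorem lintegral_lintegral_kernel_eq_of_invariant
    (hinv : ∀ A : Set E, MeasurableSet A → ∫⁻ x, P x A ∂μ = μ A) {f : E → ℝ≥0∞}
    (hf : Measurable f) : ∫⁻ x, ∫⁻ y, f y ∂(P x) ∂μ = ∫⁻ x, f x ∂μ := by
  have hbind : μ.bind P = μ := by
    ext A hA
    rw [Measure.bind_apply hA P.measurable.aemeasurable, hinv A hA]
  conv_rhs => rw [← hbind]
  rw [Measure.lintegral_bind P.measurable.aemeasurable hf.aemeasurable]

theorem restrictedIterMass_le_pow_mul {C : Set E} (hV : Measurable V) (hV1 : ∀ x, 1 ≤ V x)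
    (hdrift : ∀ x ∉ C, ∫⁻ y, V y ∂(P x) ≤ c * V x) (n : ℕ) (x : E) :
    restrictedIterMass P C n x ≤ c ^ n * V x := by
  induction n generalizing x with
  | zero => simpa [restrictedIterMass] using hV1 x
  | succ n ih =>
    rw [restrictedIterMass]
    by_cases hx : x ∈ C
    · simp [hx]
    · rw [Set.indicator_of_mem hx]
      calc ∫⁻ y, restrictedIterMass P C n y ∂(P x)
          ≤ ∫⁻ y, c ^ n * V y ∂(P x) := lintegral_mono ih
        _ = c ^ n * ∫⁻ y, V y ∂(P x) := lintegral_const_mul _ hV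
        _ ≤ c ^ n * (c * V x) := by gcongr; exact hdrift x hx
        _ = c ^ (n + 1) * V x := by ring

theorem lintegral_min_le_of_drift [IsMarkovKernel P] [IsProbabilityMeasure μ]
    (hinv : ∀ A : Set E, MeasurableSet A → ∫⁻ x, P x A ∂μ = μ A) (hV : Measurable V)
    (hdrift : ∀ x, ∫⁻ y, V y ∂(P x) ≤ c * V x + b) (a M : ℝ≥0∞) :
    ∫⁻ x, min (a * V x) M ∂μ ≤ ∫⁻ x, min (a * c * V x) M ∂μ + a * b := by
  rw [← lintegral_lintegral_kernel_eq_of_invariant hinv ((hV.const_mul a).min measurable_const)]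
  calc ∫⁻ x, ∫⁻ y, min (a * V y) M ∂(P x) ∂μ
      ≤ ∫⁻ x, (min (a * c * V x) M + a * b) ∂μ := lintegral_mono fun x => ?_
    _ = ∫⁻ x, min (a * c * V x) M ∂μ + a * b := by
        rw [lintegral_add_right _ measurable_const]; simp
  calc ∫⁻ y, min (a * V y) M ∂(P x)
      ≤ min (∫⁻ y, a * V y ∂(P x)) M := lintegral_min_le_min_lintegral _ M
    _ ≤ min (a * c * V x + a * b) M := by
        gcongr
        calc ∫⁻ y, a * V y ∂(P x) = a * ∫⁻ y, V y ∂(P x) := lintegral_const_mul _ hV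
          _ ≤ a * (c * V x + b) := by gcongr; exact hdrift x
          _ = a * c * V x + a * b := by ring
    _ ≤ min (a * c * V x) M + a * b := min_add_le_min_add _ _ _

theorem lintegral_min_le_pow_add_of_drift [IsMarkovKernel P] [IsProbabilityMeasure μ]
    (hinv : ∀ A : Set E, MeasurableSet A → ∫⁻ x, P x A ∂μ = μ A) (hV : Measurable V)
    (hdrift : ∀ x, ∫⁻ y, V y ∂(P x) ≤ c * V x + b) (M : ℝ≥0∞) (n : ℕ) :
    ∫⁻ x, min (V x) M ∂μ ≤
      ∫⁻ x, min (c ^ n * V x) M ∂μ + b * ∑ i ∈ Finset.range n, c ^ i := by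
  induction n with
  | zero => simp
  | succ n ih =>
    calc ∫⁻ x, min (V x) M ∂μ
        ≤ ∫⁻ x, min (c ^ n * V x) M ∂μ + b * ∑ i ∈ Finset.range n, c ^ i := ih
      _ ≤ (∫⁻ x, min (c ^ n * c * V x) M ∂μ + c ^ n * b) +
            b * ∑ i ∈ Finset.range n, c ^ i := by
          gcongr; exact lintegral_min_le_of_drift hinv hV hdrift _ M
      _ = ∫⁻ x, min (c ^ (n + 1) * V x) M ∂μ + b * ∑ i ∈ Finset.range (n + 1), c ^ i := by
          rw [Finset.sum_range_succ, pow_succ]; ring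

theorem tendsto_lintegral_min_pow_mul [IsFiniteMeasure μ] (hV : Measurable V)
    (hVfin : ∀ᵐ x ∂μ, V x ≠ ∞) (hc : c < 1) {M : ℝ≥0∞} (hM : M ≠ ∞) :
    Tendsto (fun n : ℕ => ∫⁻ x, min (c ^ n * V x) M ∂μ) atTop (𝓝 0) := by
  have hlim := tendsto_lintegral_of_dominated_convergence (μ := μ)
    (F := fun n x => min (c ^ n * V x) M) (f := fun _ => 0)
    (fun _ => M) (fun n => (hV.const_mul _).min measurable_const)
    (fun n => Eventually.of_forall fun x => min_le_right _ _)
    (by simpa using ENNReal.mul_ne_top hM (measure_ne_top μ Set.univ)) ?_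
  · simpa using hlim
  · filter_upwards [hVfin] with x hx
    have hpow := ENNReal.Tendsto.mul_const
      (ENNReal.tendsto_pow_atTop_nhds_zero_of_lt_one hc) (Or.inr hx)
    simpa using hpow.min (tendsto_const_nhds (x := M))

theorem lintegral_le_of_drift [IsMarkovKernel P] [IsProbabilityMeasure μ]
    (hinv : ∀ A : Set E, MeasurableSet A → ∫⁻ x, P x A ∂μ = μ A) (hV : Measurable V)
    (hVfin : ∀ᵐ x ∂μ, V x ≠ ∞) (hc : c < 1)
    (hdrift : ∀ x, ∫⁻ y, V y ∂(P x) ≤ c * V x + b) :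
    ∫⁻ x, V x ∂μ ≤ b * (1 - c)⁻¹ := by
  rw [lintegral_eq_iSup_lintegral_min_natCast hV]
  refine iSup_le fun m => ?_
  have hlim : Tendsto (fun n : ℕ => ∫⁻ x, min (c ^ n * V x) (m : ℝ≥0∞) ∂μ + b * (1 - c)⁻¹)
      atTop (𝓝 (b * (1 - c)⁻¹)) := by
    simpa using (tendsto_lintegral_min_pow_mul hV hVfin hc (ENNReal.natCast_ne_top m)).add_const
      (b * (1 - c)⁻¹)
  refine ge_of_tendsto hlim (Eventually.of_forall fun n => ?_)
  calc ∫⁻ x, min (V x) (m : ℝ≥0∞) ∂μ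
      ≤ ∫⁻ x, min (c ^ n * V x) (m : ℝ≥0∞) ∂μ + b * ∑ i ∈ Finset.range n, c ^ i :=
        lintegral_min_le_pow_add_of_drift hinv hV hdrift _ n
    _ ≤ ∫⁻ x, min (c ^ n * V x) (m : ℝ≥0∞) ∂μ + b * (1 - c)⁻¹ := by
        rw [← ENNReal.tsum_geometric]
        gcongr
        exact ENNReal.sum_le_tsum _

end Drift

theorem tsum_pow_mul_le_of_le_pow_mul {g : ℕ → ℝ≥0∞} {c v : ℝ≥0∞} (hg : ∀ n, g n ≤ c ^ n * v)
    (t : ℝ≥0∞) : ∑' n, t ^ n * g n ≤ (1 - t * c)⁻¹ * v := by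
  calc ∑' n, t ^ n * g n ≤ ∑' n, (t * c) ^ n * v :=
        ENNReal.tsum_le_tsum fun n => by rw [mul_pow, mul_assoc]; gcongr; exact hg n
    _ = (1 - t * c)⁻¹ * v := by rw [ENNReal.tsum_mul_right, ENNReal.tsum_geometric]

theorem restricted_iterates_summable_integrable_general
    {E : Type*} [MeasurableSpace E]
    (P : Kernel E E) [IsMarkovKernel P] (Pr : Measure E) [IsProbabilityMeasure Pr]
    (hinv : ∀ A : Set E, MeasurableSet A → ∫⁻ x, P x A ∂Pr = Pr A)
    (C : Set E)
    (V : E → ℝ≥0∞) (hVmeas : Measurable V) (hV1 : ∀ x, 1 ≤ V x)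
    (hVfin : Pr {x | V x = ∞} = 0)
    (γ b : ℝ) (hγ : γ ∈ Set.Ioo (0:ℝ) 1)
    (hdrift : ∀ x, ∫⁻ y, V y ∂(P x) ≤
      ENNReal.ofReal γ * V x + ENNReal.ofReal b * C.indicator 1 x) :
    ∃ s : ℝ, 1 < s ∧
      ∫⁻ x, (∑' n : ℕ, ENNReal.ofReal (s ^ n) * restrictedIterMass P C n x) ∂Pr < ∞ := by
  obtain ⟨hγ0, hγ1⟩ := hγ
  have hdrift_le : ∀ x, ∫⁻ y, V y ∂(P x) ≤ ENNReal.ofReal γ * V x + ENNReal.ofReal b :=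
    fun x => (hdrift x).trans
      (by gcongr; exact mul_le_of_le_one_right' (Set.indicator_le_self C 1 x))
  have hdrift_off : ∀ x ∉ C, ∫⁻ y, V y ∂(P x) ≤ ENNReal.ofReal γ * V x := fun x hx => by
    simpa [hx] using hdrift x
  have hVint : ∫⁻ x, V x ∂Pr < ∞ :=
    (lintegral_le_of_drift hinv hVmeas (by simpa [ae_iff] using hVfin)
      (ENNReal.ofReal_lt_one.mpr hγ1) hdrift_le).trans_lt
      (ENNReal.mul_lt_top ENNReal.ofReal_lt_top (by simpa using hγ1))
  obtain ⟨s, hs1, hsγ⟩ : ∃ s : ℝ, 1 < s ∧ s * γ < 1 :=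
    ⟨2 / (1 + γ), by rw [lt_div_iff₀ (by linarith)]; linarith,
      by rw [div_mul_eq_mul_div, div_lt_one (by linarith)]; linarith⟩
  have hs0 : 0 ≤ s := by linarith
  refine ⟨s, hs1, ?_⟩
  calc ∫⁻ x, (∑' n : ℕ, ENNReal.ofReal (s ^ n) * restrictedIterMass P C n x) ∂Pr
      ≤ ∫⁻ x, (1 - ENNReal.ofReal s * ENNReal.ofReal γ)⁻¹ * V x ∂Pr := by
        refine lintegral_mono fun x => ?_
        simp_rw [ENNReal.ofReal_pow hs0]
        exact tsum_pow_mul_le_of_le_pow_mul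
          (restrictedIterMass_le_pow_mul hVmeas hV1 hdrift_off · x) _
    _ = (1 - ENNReal.ofReal s * ENNReal.ofReal γ)⁻¹ * ∫⁻ x, V x ∂Pr :=
        lintegral_const_mul _ hVmeas
    _ < ∞ := by
        refine ENNReal.mul_lt_top ?_ hVint
        rw [← ENNReal.ofReal_mul hs0]
        simpa using hsγ

/-- If a `Π`-invariant, `Π`-irreducible transition kernel `P` satisfies a geometric drift
condition `PV ≤ γ V + b 1_C` (with `γ ∈ (0,1)`, `b < ∞`, `C` a small set, `V : E → [1,∞]`
finite `Π`-a.s.), then there exists `s > 1` such that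
`x ↦ Σ_{n≥0} sⁿ (I_{Cᶜ}P)ⁿ(x, E)` is `Π`-integrable. -/
theorem restricted_iterates_summable_integrable
    {E : Type*} [MeasurableSpace E]
    (P : Kernel E E) [IsMarkovKernel P] (Pr : Measure E) [IsProbabilityMeasure Pr]
    (hinv : ∀ A : Set E, MeasurableSet A → ∫⁻ x, P x A ∂Pr = Pr A)
    (hirr : ∀ x : E, Pr ≪ Measure.sum (fun k : ℕ => iterKernel P (k + 1) x))
    (C : Set E) (hCmeas : MeasurableSet C) (hCsmall : IsSmallSet P C)
    (V : E → ℝ≥0∞) (hVmeas : Measurable V) (hV1 : ∀ x, 1 ≤ V x)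
    (hVfin : Pr {x | V x = ∞} = 0)
    (γ b : ℝ) (hγ : γ ∈ Set.Ioo (0:ℝ) 1) (hb : 0 ≤ b)
    (hdrift : ∀ x, ∫⁻ y, V y ∂(P x) ≤
      ENNReal.ofReal γ * V x + ENNReal.ofReal b * C.indicator 1 x) :
    ∃ s : ℝ, 1 < s ∧
      ∫⁻ x, (∑' n : ℕ, ENNReal.ofReal (s ^ n) * restrictedIterMass P C n x) ∂Pr < ∞ :=
  restricted_iterates_summable_integrable_general P Pr hinv C V hVmeas hV1 hVfin γ b hγ hdrift
end

section
/- If the random-walk Metropolis kernel on ℝ^d (with symmetric proposal increment distribution Γ) is geometrically ergodic for target distribution Π, then there exists δ > 0 such that ∫ exp(δ‖x‖) Π(dx) < ∞. -/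
open MeasureTheory ProbabilityTheory
open scoped ENNReal

/-- Geometric ergodicity (geometric drift condition towards a small set of positive
`Π`-measure). -/
def GeomErgodic {E : Type*} [MeasurableSpace E] (P : Kernel E E) (Pr : Measure E) : Prop :=
  ∃ (C : Set E) (V : E → ℝ≥0∞) (γ b : ℝ),
    MeasurableSet C ∧ IsSmallSet P C ∧ 0 < Pr C ∧
    γ ∈ Set.Ioo (0:ℝ) 1 ∧ 0 ≤ b ∧ Measurable V ∧ (∀ x, 1 ≤ V x) ∧ Pr {x | V x = ∞} = 0 ∧
    ∀ x, ∫⁻ y, V y ∂(P x) ≤ ENNReal.ofReal γ * V x + ENNReal.ofReal b * C.indicator 1 x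

/-!
Metropolis kernels satisfy detailed balance, so `Π` is invariant and the drift inequality
integrates to `∫ V dΠ < ∞`. Because the proposal is a fixed translation-invariant law, the chain
jumps further than `r` only with probability `≤ ε`, uniformly in the starting point. Hence a small
set is bounded (its minorising measure must charge the `k r`-ball around each of its points),
and outside it `P V ≤ γ V` forces `V ≥ ((1 - ε) / γ) ^ n` on the shell `‖x‖ ≥ R + n r`.
So `exp (δ ‖x‖) ≤ K V x` with `δ = log ((1 - ε) / γ) / r`, and integrating against `Π` concludes.
-/

open Filter Metric Set
open scoped Topology

namespace ProbabilityTheory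

section Drift

variable {E : Type*} [MeasurableSpace E] {P : Kernel E E}

lemma Kernel.Invariant.iterKernel {μ : Measure E} (hP : P.Invariant μ) (n : ℕ) :
    (iterKernel P n).Invariant μ := by
  induction n with
  | zero => exact Measure.id_comp
  | succ n ih => exact hP.comp ih

variable [IsMarkovKernel P] {V : E → ℝ≥0∞} {a b : ℝ≥0∞}

instance iterKernel.instIsMarkovKernel (n : ℕ) : IsMarkovKernel (iterKernel P n) := by
  induction n with
  | zero => exact inferInstanceAs (IsMarkovKernel Kernel.id)
  | succ n _ => exact inferInstanceAs (IsMarkovKernel (P ∘ₖ iterKernel P n))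

lemma lintegral_iterKernel_le_of_drift (hV : Measurable V)
    (hdrift : ∀ x, ∫⁻ y, V y ∂P x ≤ a * V x + b) (n : ℕ) (x : E) :
    ∫⁻ y, V y ∂iterKernel P n x ≤ a ^ n * V x + b * ∑ i ∈ Finset.range n, a ^ i := by
  induction n with
  | zero => simp [iterKernel, Kernel.id_apply, lintegral_dirac' x hV]
  | succ n ih =>
    calc ∫⁻ y, V y ∂iterKernel P (n + 1) x
        = ∫⁻ z, ∫⁻ y, V y ∂P z ∂iterKernel P n x := Kernel.lintegral_comp _ _ _ hV
      _ ≤ ∫⁻ z, a * V z + b ∂iterKernel P n x := lintegral_mono hdrift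
      _ = a * ∫⁻ z, V z ∂iterKernel P n x + b := by
        rw [lintegral_add_right _ measurable_const, lintegral_const_mul _ hV]; simp
      _ ≤ a * (a ^ n * V x + b * ∑ i ∈ Finset.range n, a ^ i) + b := by gcongr
      _ = a ^ (n + 1) * V x + b * ∑ i ∈ Finset.range (n + 1), a ^ i := by
        rw [geom_sum_succ]; ring

theorem lintegral_le_of_drift_of_invariant {μ : Measure E} [IsProbabilityMeasure μ]
    (hμ : P.Invariant μ) (hV : Measurable V) (hVfin : ∀ᵐ x ∂μ, V x ≠ ∞) (ha : a < 1)
    (hdrift : ∀ x, ∫⁻ y, V y ∂P x ≤ a * V x + b) :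
    ∫⁻ x, V x ∂μ ≤ b * (1 - a)⁻¹ := by
  have hiter (n : ℕ) (x : E) : ∫⁻ y, V y ∂iterKernel P n x ≤ a ^ n * V x + b * (1 - a)⁻¹ := by
    refine (lintegral_iterKernel_le_of_drift hV hdrift n x).trans ?_
    rw [← ENNReal.tsum_geometric]
    gcongr
    exact ENNReal.sum_le_tsum _
  -- `∫ V dμ` may be infinite a priori, so work with the truncations `min V N`.
  set c := b * (1 - a)⁻¹
  have htrunc (N : ℕ) : ∫⁻ x, min (V x) N ∂μ ≤ c := by
    have hmeas : Measurable fun x => min (V x) N := hV.min measurable_const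
    have hle (n : ℕ) : ∫⁻ x, min (V x) N ∂μ ≤ ∫⁻ x, min (a ^ n * V x + c) N ∂μ := by
      calc ∫⁻ x, min (V x) N ∂μ = ∫⁻ x, ∫⁻ y, min (V y) N ∂iterKernel P n x ∂μ := by
            rw [← Measure.lintegral_bind (Kernel.aemeasurable _) hmeas.aemeasurable,
              (hμ.iterKernel n).def]
        _ ≤ _ := lintegral_mono fun x => le_min
            ((lintegral_mono fun y => min_le_left _ _).trans (hiter n x))
            ((lintegral_mono fun y => min_le_right _ _).trans (by simp))
    have hlim : Tendsto (fun n => ∫⁻ x, min (a ^ n * V x + c) N ∂μ) atTop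
        (𝓝 (∫⁻ _, min c N ∂μ)) := by
      refine tendsto_lintegral_of_dominated_convergence (fun _ => N)
        (fun n => ((hV.const_mul _).add_const c).min measurable_const)
        (fun n => .of_forall fun x => min_le_right _ _) (by simp) ?_
      filter_upwards [hVfin] with x hx
      have := (ENNReal.Tendsto.mul_const (ENNReal.tendsto_pow_atTop_nhds_zero_of_lt_one ha)
        (.inr hx)).add_const c
      simpa using this.min (tendsto_const_nhds (x := (N : ℝ≥0∞)))
    calc ∫⁻ x, min (V x) N ∂μ ≤ ∫⁻ _, min c N ∂μ := ge_of_tendsto' hlim hle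
      _ ≤ c := by simp
  calc ∫⁻ x, V x ∂μ = ∫⁻ x, ⨆ N : ℕ, min (V x) N ∂μ := by
        simp_rw [← inf_iSup_eq, ENNReal.iSup_natCast]; simp
    _ = ⨆ N : ℕ, ∫⁻ x, min (V x) N ∂μ :=
        lintegral_iSup (fun N => hV.min measurable_const)
          fun N M h x => min_le_min_left _ (Nat.cast_le.2 h)
    _ ≤ c := iSup_le htrunc

end Drift

lemma _root_.MeasureTheory.nonempty_inter_of_measure_compl_add_lt_one {α : Type*}
    [MeasurableSpace α] {μ : Measure α} [IsProbabilityMeasure μ] {s t : Set α}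
    (h : μ sᶜ + μ tᶜ < 1) : (s ∩ t).Nonempty := by
  by_contra hst
  have hcover : sᶜ ∪ tᶜ = univ := by
    rw [← compl_inter, not_nonempty_iff_eq_empty.1 hst, compl_empty]
  exact (measure_union_le (μ := μ) sᶜ tᶜ).not_gt (by rwa [hcover, measure_univ])

section Local

variable {E : Type*} [MeasurableSpace E] [PseudoMetricSpace E] [OpensMeasurableSpace E]

def Kernel.IsUniformlyLocal (P : Kernel E E) : Prop :=
  ∀ ε > (0 : ℝ≥0∞), ∃ r > (0 : ℝ), ∀ x, P x (closedBall x r)ᶜ ≤ ε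

lemma iterKernel_compl_closedBall_le {P : Kernel E E} [IsMarkovKernel P] {r : ℝ} {ε : ℝ≥0∞}
    (hP : ∀ x, P x (closedBall x r)ᶜ ≤ ε) (n : ℕ) (x : E) :
    iterKernel P n x (closedBall x (n * r))ᶜ ≤ n * ε := by
  induction n with
  | zero => simp [iterKernel, Kernel.id_apply, measurableSet_closedBall]
  | succ n ih =>
    have hstep (z : E) : P z (closedBall x ((n + 1 : ℕ) * r))ᶜ
        ≤ ε + (closedBall x (n * r))ᶜ.indicator 1 z := by
      by_cases hz : z ∈ closedBall x (n * r)
      · refine le_add_right ((measure_mono (compl_subset_compl.2 fun y hy => ?_)).trans (hP z))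
        rw [mem_closedBall] at hy hz ⊢
        push_cast
        linarith [dist_triangle y z x]
      · simpa [hz] using le_add_left prob_le_one
    calc iterKernel P (n + 1) x (closedBall x ((n + 1 : ℕ) * r))ᶜ
        = ∫⁻ z, P z (closedBall x ((n + 1 : ℕ) * r))ᶜ ∂iterKernel P n x :=
          Kernel.comp_apply' _ _ _ measurableSet_closedBall.compl
      _ ≤ ∫⁻ z, ε + (closedBall x (n * r))ᶜ.indicator 1 z ∂iterKernel P n x :=
          lintegral_mono hstep
      _ = ε + iterKernel P n x (closedBall x (n * r))ᶜ := by
          rw [lintegral_add_left measurable_const,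
            lintegral_indicator_one measurableSet_closedBall.compl]
          simp
      _ ≤ (n + 1 : ℕ) * ε := by push_cast; rw [add_mul, one_mul, add_comm]; gcongr

theorem IsSmallSet.isBounded {P : Kernel E E} [IsMarkovKernel P] (hP : P.IsUniformlyLocal)
    {C : Set E} (hC : IsSmallSet P C) : Bornology.IsBounded C := by
  obtain ⟨k, δ, ν, -, ⟨hδ, -⟩, hν, hminor⟩ := hC
  have hδ' : ENNReal.ofReal δ ≠ 0 := (ENNReal.ofReal_pos.2 hδ).ne'
  obtain ⟨ε, hε, hεk⟩ := ENNReal.exists_nnreal_pos_mul_lt (ENNReal.natCast_ne_top k)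
    (b := ENNReal.ofReal δ * 2⁻¹) (mul_ne_zero hδ' (by simp))
  obtain ⟨r, -, hr⟩ := hP ε (by exact_mod_cast hε)
  -- Minorisation and locality of `P^k`: `ν` gives mass `> 1/2` to the `k r`-ball around every
  -- point of `C`, so any two of these balls meet.
  have hfar (x : E) (hx : x ∈ C) : ν (closedBall x (k * r))ᶜ < 2⁻¹ := by
    refine (ENNReal.mul_right_strictMono hδ' ENNReal.ofReal_ne_top).lt_iff_lt.1 ?_
    calc ENNReal.ofReal δ * ν (closedBall x (k * r))ᶜ
        ≤ iterKernel P k x (closedBall x (k * r))ᶜ := hminor x hx _ measurableSet_closedBall.compl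
      _ ≤ k * ε := iterKernel_compl_closedBall_le hr k x
      _ < ENNReal.ofReal δ * 2⁻¹ := by rwa [mul_comm]
  refine Metric.isBounded_iff.2 ⟨2 * (k * r), fun x hx y hy => ?_⟩
  obtain ⟨z, hzx, hzy⟩ := nonempty_inter_of_measure_compl_add_lt_one
    ((ENNReal.add_lt_add (hfar x hx) (hfar y hy)).trans_eq ENNReal.inv_two_add_inv_two)
  rw [mem_closedBall] at hzx hzy
  linarith [dist_triangle_left x y z]

lemma tendsto_measure_compl_closedBall_atTop (μ : Measure E) [IsFiniteMeasure μ] (x : E) :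
    Tendsto (fun r => μ (closedBall x r)ᶜ) atTop (𝓝 0) := by
  have hempty : ⋂ r : ℝ, (closedBall x r)ᶜ = ∅ :=
    eq_empty_of_forall_notMem fun y hy => mem_iInter.1 hy (dist y x) (mem_closedBall.2 le_rfl)
  simpa [hempty, Function.comp_def] using tendsto_measure_iInter_atTop (μ := μ)
    (s := fun r : ℝ => (closedBall x r)ᶜ)
    (fun r => measurableSet_closedBall.compl.nullMeasurableSet)
    (fun r s hrs => compl_subset_compl.2 (closedBall_subset_closedBall hrs))
    ⟨0, measure_ne_top μ _⟩

end Local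


section ExponentialMoment

variable {E : Type*} [SeminormedAddCommGroup E] {V : E → ℝ≥0∞}

lemma ofReal_exp_mul_norm_le (hV1 : ∀ x, 1 ≤ V x) {R r ρ : ℝ} (hr : 0 < r) (hρ : 1 ≤ ρ)
    (hgrowth : ∀ (n : ℕ) x, R + n * r ≤ ‖x‖ → ENNReal.ofReal ρ ^ n ≤ V x) (x : E) :
    ENNReal.ofReal (Real.exp (Real.log ρ / r * ‖x‖))
      ≤ ENNReal.ofReal (Real.exp (Real.log ρ / r * (R + r))) * V x := by
  set n := ⌊(‖x‖ - R) / r⌋₊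
  have hδ : 0 ≤ Real.log ρ / r := div_nonneg (Real.log_nonneg hρ) hr.le
  have hlt : ‖x‖ ≤ R + (n + 1) * r := by
    have := (div_lt_iff₀ hr).1 (Nat.lt_floor_add_one ((‖x‖ - R) / r))
    linarith
  have hVn : ENNReal.ofReal ρ ^ n ≤ V x := by
    rcases Nat.eq_zero_or_pos n with hn | hn
    · simpa [hn] using hV1 x
    · refine hgrowth n x ?_
      have := (le_div_iff₀ hr).1 (Nat.floor_le (zero_le_one.trans (Nat.floor_pos.1 hn)))
      linarith
  calc ENNReal.ofReal (Real.exp (Real.log ρ / r * ‖x‖))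
      ≤ ENNReal.ofReal (Real.exp (Real.log ρ / r * (R + (n + 1) * r))) := by gcongr
    _ = ENNReal.ofReal (Real.exp (Real.log ρ / r * (R + r))) * ENNReal.ofReal ρ ^ n := by
      rw [← ENNReal.ofReal_pow (by linarith), ← ENNReal.ofReal_mul (Real.exp_pos _).le,
        ← Real.exp_log (by linarith : 0 < ρ), ← Real.exp_nat_mul, ← Real.exp_add,
        Real.exp_log (by linarith)]
      congr 2
      field_simp
      ring
    _ ≤ _ := by gcongr

variable [MeasurableSpace E] [OpensMeasurableSpace E] {P : Kernel E E} [IsMarkovKernel P]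

lemma pow_le_of_drift_of_compl_closedBall_le (hV : Measurable V) (hV1 : ∀ x, 1 ≤ V x)
    {R r : ℝ} (hr : 0 < r) {a ε ρ : ℝ≥0∞} (hloc : ∀ x, P x (closedBall x r)ᶜ ≤ ε)
    (hdrift : ∀ x, R < ‖x‖ → ∫⁻ y, V y ∂P x ≤ a * V x) (hρ : ρ ≤ (1 - ε) / a) (n : ℕ) :
    ∀ x, R + n * r ≤ ‖x‖ → ρ ^ n ≤ V x := by
  induction n with
  | zero => intro x _; simpa using hV1 x
  | succ n ih =>
    intro x hx
    push_cast at hx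
    -- `B(x, r)` lies in the previous shell, and `P x` charges it with mass `≥ 1 - ε`.
    have hball : closedBall x r ⊆ {y | ρ ^ n ≤ V y} := fun y hy => by
      refine ih y ?_
      linarith [norm_sub_norm_le x y, norm_sub_rev x y, dist_eq_norm y x, mem_closedBall.1 hy]
    have hstay : 1 - ε ≤ P x (closedBall x r) := by
      rw [← compl_compl (closedBall x r), prob_compl_eq_one_sub measurableSet_closedBall.compl]
      exact tsub_le_tsub_left (hloc x) 1
    have hmass : ρ ^ n * (1 - ε) ≤ V x * a :=
      calc ρ ^ n * (1 - ε) ≤ ρ ^ n * P x {y | ρ ^ n ≤ V y} := by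
            gcongr; exact hstay.trans (measure_mono hball)
        _ ≤ ∫⁻ y, V y ∂P x := mul_meas_ge_le_lintegral₀ hV.aemeasurable _
        _ ≤ V x * a := by
            rw [mul_comm]; exact hdrift x (by linarith [mul_pos (Nat.cast_add_one_pos n) hr])
    calc ρ ^ (n + 1) ≤ ρ ^ n * ((1 - ε) / a) := by rw [pow_succ]; gcongr
      _ ≤ V x := by rw [← mul_div_assoc]; exact ENNReal.div_le_of_le_mul hmass

theorem exists_lintegral_exp_norm_lt_top_of_drift (hP : P.IsUniformlyLocal) (μ : Measure E)
    (hV : Measurable V) (hV1 : ∀ x, 1 ≤ V x) (hVint : ∫⁻ x, V x ∂μ ≠ ∞) {R γ : ℝ}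
    (hγ0 : 0 < γ) (hγ1 : γ < 1)
    (hdrift : ∀ x, R < ‖x‖ → ∫⁻ y, V y ∂P x ≤ ENNReal.ofReal γ * V x) :
    ∃ δ > 0, ∫⁻ x, ENNReal.ofReal (Real.exp (δ * ‖x‖)) ∂μ < ∞ := by
  obtain ⟨r, hr, hloc⟩ := hP (ENNReal.ofReal ((1 - γ) / 2)) (by simp; linarith)
  set ρ := (1 - (1 - γ) / 2) / γ
  have hρ1 : 1 < ρ := by rw [one_lt_div hγ0]; linarith
  have hρ : ENNReal.ofReal ρ ≤ (1 - ENNReal.ofReal ((1 - γ) / 2)) / ENNReal.ofReal γ := by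
    rw [← ENNReal.ofReal_one, ← ENNReal.ofReal_sub _ (by linarith), ENNReal.ofReal_div_of_pos hγ0]
  have hbound := ofReal_exp_mul_norm_le hV1 hr hρ1.le
    (pow_le_of_drift_of_compl_closedBall_le hV hV1 hr hloc hdrift hρ)
  refine ⟨Real.log ρ / r, div_pos (Real.log_pos hρ1) hr, ?_⟩
  calc ∫⁻ x, ENNReal.ofReal (Real.exp (Real.log ρ / r * ‖x‖)) ∂μ
      ≤ ∫⁻ x, ENNReal.ofReal (Real.exp (Real.log ρ / r * (R + r))) * V x ∂μ :=
        lintegral_mono hbound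
    _ = ENNReal.ofReal (Real.exp (Real.log ρ / r * (R + r))) * ∫⁻ x, V x ∂μ :=
      lintegral_const_mul _ hV
    _ < ∞ := ENNReal.mul_lt_top ENNReal.ofReal_lt_top hVint.lt_top

end ExponentialMoment

section RandomWalk

variable {G : Type*} [MeasurableSpace G] [AddCommGroup G]

lemma lintegral_lintegral_add_neg [MeasurableAdd₂ G] [MeasurableNeg G] {μ Γ : Measure G}
    [SFinite μ] [SFinite Γ] [μ.IsAddRightInvariant] [Γ.IsNegInvariant] {F : G → G → ℝ≥0∞}
    (hF : Measurable (Function.uncurry F)) :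
    ∫⁻ x, ∫⁻ z, F (x + z) (-z) ∂Γ ∂μ = ∫⁻ x, ∫⁻ z, F x z ∂Γ ∂μ := by
  have hF' : Measurable (Function.uncurry fun x z => F (x + z) (-z)) :=
    hF.comp ((measurable_fst.add measurable_snd).prodMk measurable_snd.neg)
  rw [lintegral_lintegral_swap hF'.aemeasurable, lintegral_lintegral_swap hF.aemeasurable]
  calc ∫⁻ z, ∫⁻ x, F (x + z) (-z) ∂μ ∂Γ = ∫⁻ z, ∫⁻ x, F x (-z) ∂μ ∂Γ := by
        congr with z
        exact lintegral_add_right_eq_self (fun x => F x (-z)) z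
    _ = ∫⁻ z, ∫⁻ x, F x z ∂μ ∂Γ := lintegral_neg_eq_self (fun z => ∫⁻ x, F x z ∂μ)

/-- `P` proposes `x + z` with `z ∼ Γ`, accepts the proposal with probability `α x z`, and
otherwise stays at `x`. -/
def Kernel.IsRandomWalkAcceptReject (P : Kernel G G) (Γ : Measure G) (α : G → G → ℝ≥0∞) :
    Prop :=
  ∀ x A, MeasurableSet A → P x A = ∫⁻ z, A.indicator (fun _ => α x z) (x + z) ∂Γ
    + A.indicator (fun _ => 1 - ∫⁻ z, α x z ∂Γ) x

namespace Kernel.IsRandomWalkAcceptReject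

variable {P : Kernel G G} {μ Γ : Measure G} {α : G → G → ℝ≥0∞} {f : G → ℝ≥0∞}
  {A B : Set G}

lemma apply_eq (hP : P.IsRandomWalkAcceptReject Γ α) (hB : MeasurableSet B) (x : G) :
    P x B = ∫⁻ z, B.indicator 1 (x + z) * α x z ∂Γ
      + B.indicator 1 x * (1 - ∫⁻ z, α x z ∂Γ) := by
  rw [hP x B hB]
  congr 1
  · refine lintegral_congr fun z => ?_
    by_cases hz : x + z ∈ B <;> simp [hz]
  · by_cases hx : x ∈ B <;> simp [hx]

lemma setLIntegral_withDensity [MeasurableAdd₂ G] [SFinite Γ]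
    (hP : P.IsRandomWalkAcceptReject Γ α) (hα : Measurable (Function.uncurry α))
    (hf : Measurable f) (hA : MeasurableSet A) (hB : MeasurableSet B) :
    ∫⁻ x in A, P x B ∂μ.withDensity f
      = ∫⁻ x, ∫⁻ z, A.indicator 1 x * B.indicator 1 (x + z) * (f x * α x z) ∂Γ ∂μ
        + ∫⁻ x in A ∩ B, f x * (1 - ∫⁻ z, α x z ∂Γ) ∂μ := by
  have hF : Measurable (Function.uncurry fun x z =>
      A.indicator 1 x * B.indicator 1 (x + z) * (f x * α x z)) :=
    (((measurable_one.indicator hA).comp measurable_fst).mul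
      ((measurable_one.indicator hB).comp (measurable_fst.add measurable_snd))).mul
      ((hf.comp measurable_fst).mul hα)
  rw [setLIntegral_withDensity_eq_setLIntegral_mul _ hf (P.measurable_coe hB) hA,
    ← lintegral_indicator hA, ← lintegral_indicator (hA.inter hB),
    ← lintegral_add_left (hF.lintegral_prod_right (ν := Γ))]
  refine lintegral_congr fun x => ?_
  by_cases hx : x ∈ A
  · have hmeas : Measurable fun z => B.indicator 1 (x + z) * α x z :=
      ((measurable_one.indicator hB).comp (measurable_const_add x)).mul
        (hα.comp measurable_prodMk_left)
    simp only [Set.indicator_of_mem hx, Pi.mul_apply, hP.apply_eq hB, mul_add,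
      ← lintegral_const_mul _ hmeas]
    congr 1
    · refine lintegral_congr fun z => ?_
      simp only [Pi.one_apply]
      ring
    · by_cases hxB : x ∈ B <;> simp [hx, hxB]
  · simp [hx]

theorem isReversible [MeasurableAdd₂ G] [MeasurableNeg G] [SFinite μ] [SFinite Γ]
    [μ.IsAddRightInvariant] [Γ.IsNegInvariant]
    (hP : P.IsRandomWalkAcceptReject Γ α) (hα : Measurable (Function.uncurry α))
    (hf : Measurable f) (hbalance : ∀ x z, f (x + z) * α (x + z) (-z) = f x * α x z) :
    P.IsReversible (μ.withDensity f) := by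
  intro A B hA hB
  have hF : Measurable (Function.uncurry fun x z =>
      B.indicator 1 x * A.indicator 1 (x + z) * (f x * α x z)) :=
    (((measurable_one.indicator hB).comp measurable_fst).mul
      ((measurable_one.indicator hA).comp (measurable_fst.add measurable_snd))).mul
      ((hf.comp measurable_fst).mul hα)
  rw [hP.setLIntegral_withDensity hα hf hA hB, hP.setLIntegral_withDensity hα hf hB hA,
    inter_comm, ← lintegral_lintegral_add_neg hF]
  congr 1
  refine lintegral_congr fun x => lintegral_congr fun z => ?_
  rw [hbalance, add_neg_cancel_right]
  ring

end Kernel.IsRandomWalkAcceptReject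

end RandomWalk

namespace Kernel.IsRandomWalkAcceptReject

variable {E : Type*} [MeasurableSpace E] [SeminormedAddCommGroup E] [OpensMeasurableSpace E]
  {P : Kernel E E} {Γ : Measure E} {α : E → E → ℝ≥0∞}

lemma apply_compl_closedBall_le (hP : P.IsRandomWalkAcceptReject Γ α) (hα1 : ∀ x z, α x z ≤ 1)
    {r : ℝ} (hr : 0 ≤ r) (x : E) : P x (closedBall x r)ᶜ ≤ Γ (closedBall 0 r)ᶜ := by
  have hpre (z : E) : (closedBall x r)ᶜ.indicator (1 : E → ℝ≥0∞) (x + z)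
      = (closedBall 0 r)ᶜ.indicator 1 z := by
    by_cases hz : z ∈ closedBall 0 r <;> simp_all [dist_eq_norm]
  rw [hP.apply_eq measurableSet_closedBall.compl,
    indicator_of_notMem (not_not.2 (mem_closedBall_self hr)), zero_mul, add_zero,
    ← lintegral_indicator_one measurableSet_closedBall.compl]
  exact lintegral_mono fun z => (mul_le_of_le_one_right' (hα1 x z)).trans_eq (hpre z)

lemma isUniformlyLocal [IsFiniteMeasure Γ] (hP : P.IsRandomWalkAcceptReject Γ α)
    (hα1 : ∀ x z, α x z ≤ 1) : P.IsUniformlyLocal := by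
  intro ε hε
  obtain ⟨r, hrε, hr⟩ := (((tendsto_measure_compl_closedBall_atTop Γ 0).eventually
    (ge_mem_nhds hε)).and (eventually_gt_atTop 0)).exists
  exact ⟨r, hr, fun x => (hP.apply_compl_closedBall_le hα1 hr.le x).trans hrε⟩

end Kernel.IsRandomWalkAcceptReject

lemma _root_.ENNReal.ofReal_mul_ofReal_min_one_div (a b : ℝ) :
    ENNReal.ofReal a * ENNReal.ofReal (min 1 (b / a)) = ENNReal.ofReal (min a b) := by
  rcases le_or_gt a 0 with ha | ha
  · simp [ENNReal.ofReal_of_nonpos ha, ENNReal.ofReal_of_nonpos ((min_le_left _ _).trans ha)]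
  · rw [← ENNReal.ofReal_mul ha.le, mul_min_of_nonneg _ _ ha.le, mul_one,
      mul_div_cancel₀ _ ha.ne']

end ProbabilityTheory

theorem rwm_geomErgodic_exp_moment_general
    {d : ℕ} (π : EuclideanSpace ℝ (Fin d) → ℝ)
    (hπmeas : Measurable π)
    (Pr : Measure (EuclideanSpace ℝ (Fin d))) [IsProbabilityMeasure Pr]
    (hdens : Pr = volume.withDensity (fun x => ENNReal.ofReal (π x)))
    (Γ : Measure (EuclideanSpace ℝ (Fin d))) [IsProbabilityMeasure Γ]
    (hΓsymm : Measure.map (fun z => -z) Γ = Γ)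
    (P : Kernel (EuclideanSpace ℝ (Fin d)) (EuclideanSpace ℝ (Fin d))) [IsMarkovKernel P]
    -- P is the random-walk Metropolis kernel with proposal increment Γ and target π:
    (hP : ∀ x, ∀ A : Set (EuclideanSpace ℝ (Fin d)), MeasurableSet A →
      P x A = (∫⁻ z, A.indicator
                (fun _ => ENNReal.ofReal (min 1 (π (x + z) / π x))) (x + z) ∂Γ)
        + A.indicator
            (fun _ => 1 - ∫⁻ z, ENNReal.ofReal (min 1 (π (x + z) / π x)) ∂Γ) x)
    (herg : GeomErgodic P Pr) :
    ∃ δ : ℝ, 0 < δ ∧ ∫⁻ x, ENNReal.ofReal (Real.exp (δ * ‖x‖)) ∂Pr < ∞ := by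
  set α : EuclideanSpace ℝ (Fin d) → EuclideanSpace ℝ (Fin d) → ℝ≥0∞ :=
    fun x z => ENNReal.ofReal (min 1 (π (x + z) / π x))
  have hα : Measurable (Function.uncurry α) := ENNReal.measurable_ofReal.comp
    (measurable_const.min ((hπmeas.comp (measurable_fst.add measurable_snd)).div
      (hπmeas.comp measurable_fst)))
  have hRWM : P.IsRandomWalkAcceptReject Γ α := hP
  have hloc := hRWM.isUniformlyLocal fun x z => ENNReal.ofReal_le_one.2 (min_le_left _ _)
  have : Γ.IsNegInvariant := ⟨hΓsymm⟩
  -- Detailed balance: both sides equal `min (π x) (π (x + z))`.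
  have hbalance (x z) :
      ENNReal.ofReal (π (x + z)) * α (x + z) (-z) = ENNReal.ofReal (π x) * α x z := by
    simp only [α, add_neg_cancel_right, ENNReal.ofReal_mul_ofReal_min_one_div, min_comm]
  have hinv : P.Invariant Pr :=
    hdens ▸ (hRWM.isReversible hα hπmeas.ennreal_ofReal hbalance).invariant
  obtain ⟨C, V, γ, b, -, hC, -, ⟨hγ0, hγ1⟩, -, hV, hV1, hVfin, hdrift⟩ := herg
  have hγ : ENNReal.ofReal γ < 1 := ENNReal.ofReal_lt_one.2 hγ1
  have hdrift' (x) : ∫⁻ y, V y ∂P x ≤ ENNReal.ofReal γ * V x + ENNReal.ofReal b :=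
    (hdrift x).trans (by by_cases hx : x ∈ C <;> simp [hx])
  have hVint : ∫⁻ x, V x ∂Pr ≠ ∞ :=
    ((lintegral_le_of_drift_of_invariant hinv hV (ae_iff.2 (by simpa using hVfin)) hγ
      hdrift').trans_lt
      (ENNReal.mul_lt_top ENNReal.ofReal_lt_top (ENNReal.inv_lt_top.2 (tsub_pos_of_lt hγ)))).ne
  obtain ⟨R, hR⟩ := (hC.isBounded hloc).subset_closedBall 0
  exact exists_lintegral_exp_norm_lt_top_of_drift hloc Pr hV hV1 hVint hγ0 hγ1 fun x hx => by
    have hxC : x ∉ C := fun h => (mem_closedBall_zero_iff.1 (hR h)).not_gt hx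
    simpa [hxC] using hdrift x

/-- If the random-walk Metropolis kernel on `ℝ^d` (symmetric proposal increment law `Γ`,
target density `π`) is geometrically ergodic, then `∫ exp(δ‖x‖) Π(dx) < ∞` for some
`δ > 0`. -/
theorem rwm_geomErgodic_exp_moment
    {d : ℕ} (π : EuclideanSpace ℝ (Fin d) → ℝ) (hπpos : ∀ x, 0 < π x)
    (hπmeas : Measurable π)
    (Pr : Measure (EuclideanSpace ℝ (Fin d))) [IsProbabilityMeasure Pr]
    (hdens : Pr = volume.withDensity (fun x => ENNReal.ofReal (π x)))
    (Γ : Measure (EuclideanSpace ℝ (Fin d))) [IsProbabilityMeasure Γ]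
    (hΓsymm : Measure.map (fun z => -z) Γ = Γ)
    (P : Kernel (EuclideanSpace ℝ (Fin d)) (EuclideanSpace ℝ (Fin d))) [IsMarkovKernel P]
    -- P is the random-walk Metropolis kernel with proposal increment Γ and target π:
    (hP : ∀ x, ∀ A : Set (EuclideanSpace ℝ (Fin d)), MeasurableSet A →
      P x A = (∫⁻ z, A.indicator
                (fun _ => ENNReal.ofReal (min 1 (π (x + z) / π x))) (x + z) ∂Γ)
        + A.indicator
            (fun _ => 1 - ∫⁻ z, ENNReal.ofReal (min 1 (π (x + z) / π x)) ∂Γ) x)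
    (herg : GeomErgodic P Pr) :
    ∃ δ : ℝ, 0 < δ ∧ ∫⁻ x, ENNReal.ofReal (Real.exp (δ * ‖x‖)) ∂Pr < ∞ :=
  rwm_geomErgodic_exp_moment_general π hπmeas Pr hdens Γ hΓsymm P hP herg
end

section
/- Let P be a Π-irreducible, Π-invariant transition kernel that is geometrically ergodic, where Π is not a point mass. Then Π-ess sup_x P(x, {x}) < 1. -/
open MeasureTheory ProbabilityTheory
open scoped ENNReal

instance iterKernel.instIsMarkovKernel {E : Type*} [MeasurableSpace E] (P : Kernel E E)
    [IsMarkovKernel P] (n : ℕ) : IsMarkovKernel (iterKernel P n) := by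
  induction n with
  | zero => exact inferInstanceAs (IsMarkovKernel Kernel.id)
  | succ n ih => exact inferInstanceAs (IsMarkovKernel (P ∘ₖ iterKernel P n))

lemma ENNReal.exists_lt_one_forall_le_of_pow_le {k : ℕ} (hk : k ≠ 0) {s : ℝ≥0∞}
    (hs : s < 1) : ∃ c < 1, ∀ t : ℝ≥0∞, t ^ k ≤ s → t ≤ c :=
  ⟨s ^ (k : ℝ)⁻¹,
    ENNReal.rpow_lt_one hs (inv_pos.2 (Nat.cast_pos.2 (Nat.pos_of_ne_zero hk))),
    fun t ht =>
      (ENNReal.pow_le_pow_left_iff hk).1 (by rwa [ENNReal.rpow_inv_natCast_pow hk])⟩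

lemma Set.Subsingleton.exists_lt_one_forall_le {α : Type*} {s : Set α} (hs : s.Subsingleton)
    {f : α → ℝ≥0∞} (hf : ∀ x ∈ s, f x < 1) : ∃ c < 1, ∀ x ∈ s, f x ≤ c := by
  rcases hs.eq_empty_or_singleton with rfl | ⟨x₀, rfl⟩
  · exact ⟨0, zero_lt_one, by simp⟩
  · exact ⟨f x₀, hf x₀ rfl, by simp⟩

section
variable {E : Type*} [MeasurableSpace E] [MeasurableSingletonClass E]

lemma subsingleton_setOf_inv_two_lt_measure_singleton (ν : Measure E) [IsProbabilityMeasure ν] :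
    {x | 2⁻¹ < ν {x}}.Subsingleton := by
  intro x hx y hy
  by_contra hxy
  have hsum : ν {x} + ν {y} ≤ 1 := by
    rw [← measure_union (Set.disjoint_singleton.2 hxy) (measurableSet_singleton y)]
    exact prob_le_one
  exact (ENNReal.inv_two_add_inv_two ▸ ENNReal.add_lt_add hx hy).not_ge hsum

lemma measure_singleton_le_of_lintegral_le {μ : Measure E} {V : E → ℝ≥0∞} {γ : ℝ≥0∞}
    {x : E} (h : ∫⁻ y, V y ∂μ ≤ γ * V x) (h0 : V x ≠ 0) (htop : V x ≠ ∞) :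
    μ {x} ≤ γ := by
  refine (ENNReal.mul_le_mul_iff_right h0 htop).1 ?_
  calc V x * μ {x} = ∫⁻ y in {x}, V y ∂μ := (lintegral_singleton V x).symm
    _ ≤ ∫⁻ y, V y ∂μ := setLIntegral_le_lintegral _ _
    _ ≤ γ * V x := h
    _ = V x * γ := mul_comm _ _

lemma pow_le_iterKernel_apply_singleton (P : Kernel E E) (x : E) (n : ℕ) :
    P x {x} ^ n ≤ iterKernel P n x {x} := by
  induction n with
  | zero => simp [iterKernel, Kernel.id_apply]
  | succ n ih =>
    calc P x {x} ^ (n + 1) = P x {x} * P x {x} ^ n := pow_succ' _ _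
      _ ≤ P x {x} * iterKernel P n x {x} := by gcongr
      _ = ∫⁻ y in {x}, P y {x} ∂(iterKernel P n x) :=
        (lintegral_singleton (P · {x}) x).symm
      _ ≤ ∫⁻ y, P y {x} ∂(iterKernel P n x) := setLIntegral_le_lintegral _ _
      _ = iterKernel P (n + 1) x {x} :=
        (Kernel.comp_apply' _ _ _ (measurableSet_singleton x)).symm

variable {P : Kernel E E} [IsMarkovKernel P]

lemma iterKernel_apply_compl_singleton_eq_zero {x : E} (hx : P x {x} = 1) (n : ℕ) :
    iterKernel P n x {x}ᶜ = 0 :=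
  (prob_compl_eq_zero_iff (measurableSet_singleton x)).2 <|
    le_antisymm prob_le_one (by simpa [hx] using pow_le_iterKernel_apply_singleton P x n)

/-- An absorbing point `x` would force `Pr = δ_x`. -/
lemma apply_singleton_lt_one_of_absolutelyContinuous {Pr : Measure E}
    [IsProbabilityMeasure Pr] {x : E}
    (hirr : Pr ≪ Measure.sum (fun k : ℕ => iterKernel P (k + 1) x)) (hx : Pr {x} < 1) :
    P x {x} < 1 := by
  refine lt_of_le_of_ne prob_le_one fun h1 => hx.ne ?_
  rw [← prob_compl_eq_zero_iff (measurableSet_singleton x)]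
  refine hirr ?_
  simp [Measure.sum_apply _ (measurableSet_singleton x).compl,
    iterKernel_apply_compl_singleton_eq_zero h1]

lemma pow_apply_singleton_le_of_le_iterKernel {k : ℕ} {ε : ℝ≥0∞} {x : E}
    (h : ε ≤ iterKernel P k x {x}ᶜ) : P x {x} ^ k ≤ 1 - ε :=
  calc P x {x} ^ k ≤ iterKernel P k x {x} := pow_le_iterKernel_apply_singleton P x k
    _ = 1 - iterKernel P k x {x}ᶜ := by
      rw [prob_compl_eq_one_sub (measurableSet_singleton x),
        ENNReal.sub_sub_cancel ENNReal.one_ne_top prob_le_one]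
    _ ≤ 1 - ε := tsub_le_tsub_left h 1

lemma IsSmallSet.exists_lt_one_forall_apply_singleton_le {C : Set E} (hC : IsSmallSet P C)
    (hP : ∀ x, P x {x} < 1) : ∃ c < 1, ∀ x ∈ C, P x {x} ≤ c := by
  obtain ⟨k, δ, ν, hk, hδ, hν, hmin⟩ := hC
  obtain ⟨c₁, hc₁, hpow⟩ := ENNReal.exists_lt_one_forall_le_of_pow_le (k := k) (by omega)
    (s := 1 - ENNReal.ofReal δ * 2⁻¹)
    (ENNReal.sub_lt_self ENNReal.one_ne_top one_ne_zero
      (mul_ne_zero (ENNReal.ofReal_pos.2 hδ.1).ne' (by simp)))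
  obtain ⟨c₂, hc₂, hatom⟩ :=
    (subsingleton_setOf_inv_two_lt_measure_singleton ν).exists_lt_one_forall_le
      (f := fun x => P x {x}) fun x _ => hP x
  refine ⟨max c₁ c₂, max_lt hc₁ hc₂, fun x hx => ?_⟩
  rcases lt_or_ge 2⁻¹ (ν {x}) with hatom_x | hνx
  · exact (hatom x hatom_x).trans (le_max_right _ _)
  · refine (hpow _ (pow_apply_singleton_le_of_le_iterKernel ?_)).trans (le_max_left _ _)
    calc ENNReal.ofReal δ * 2⁻¹ ≤ ENNReal.ofReal δ * ν {x}ᶜ := by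
          rw [prob_compl_eq_one_sub (measurableSet_singleton x), ← ENNReal.one_sub_inv_two]
          gcongr
      _ ≤ iterKernel P k x {x}ᶜ := hmin x hx _ (measurableSet_singleton x).compl

end

theorem holding_prob_essSup_lt_one_of_geomErgodic_general
    {E : Type*} [MeasurableSpace E] [MeasurableSingletonClass E]
    (P : Kernel E E) [IsMarkovKernel P] (Pr : Measure E) [IsProbabilityMeasure Pr]
    (hirr : ∀ x : E, Pr ≪ Measure.sum (fun k : ℕ => iterKernel P (k + 1) x))
    (hnotpoint : ∀ x : E, Pr {x} < 1)
    (herg : GeomErgodic P Pr) :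
    ∃ c : ℝ, c < 1 ∧ ∀ᵐ x ∂Pr, P x {x} ≤ ENNReal.ofReal c := by
  obtain ⟨C, V, γ, b, -, hC, -, hγ, -, -, hV1, hVfin, hdrift⟩ := herg
  obtain ⟨c, hc, hcC⟩ := hC.exists_lt_one_forall_apply_singleton_le fun x =>
    apply_singleton_lt_one_of_absolutelyContinuous (hirr x) (hnotpoint x)
  set c' := max (ENNReal.ofReal γ) c
  have hc' : c' < 1 := max_lt (ENNReal.ofReal_lt_one.2 hγ.2) hc
  refine ⟨c'.toReal, ENNReal.toReal_lt_of_lt_ofReal (by simpa using hc'), ?_⟩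
  have hVae : ∀ᵐ x ∂Pr, V x ≠ ∞ := measure_eq_zero_iff_ae_notMem.1 hVfin
  filter_upwards [hVae] with x hVx
  rw [ENNReal.ofReal_toReal hc'.ne_top]
  by_cases hxC : x ∈ C
  · exact (hcC x hxC).trans (le_max_right _ _)
  · have hdriftx : ∫⁻ y, V y ∂(P x) ≤ ENNReal.ofReal γ * V x := by
      simpa [hxC] using hdrift x
    exact (measure_singleton_le_of_lintegral_le hdriftx (one_pos.trans_le (hV1 x)).ne' hVx).trans
      (le_max_left _ _)

/-- If a `Π`-irreducible, `Π`-invariant, geometrically ergodic Markov kernel has invariant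
law `Π` which is not a point mass, then `Π`-ess sup of the holding probability
`P(x, {x})` is `< 1`. -/
theorem holding_prob_essSup_lt_one_of_geomErgodic
    {E : Type*} [MeasurableSpace E] [MeasurableSingletonClass E]
    (P : Kernel E E) [IsMarkovKernel P] (Pr : Measure E) [IsProbabilityMeasure Pr]
    (hinv : ∀ A : Set E, MeasurableSet A → ∫⁻ x, P x A ∂Pr = Pr A)
    (hirr : ∀ x : E, Pr ≪ Measure.sum (fun k : ℕ => iterKernel P (k + 1) x))
    (hnotpoint : ∀ x : E, Pr {x} < 1)
    (herg : GeomErgodic P Pr) :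
    ∃ c : ℝ, c < 1 ∧ ∀ᵐ x ∂Pr, P x {x} ≤ ENNReal.ofReal c :=
  holding_prob_essSup_lt_one_of_geomErgodic_general P Pr hirr hnotpoint herg
end

section
/- Let ξ be a real random variable with distribution symmetric about 0 and P(ξ > 0) > 0, and let s ∈ (0,1), c > 0. Then E[(e^{-cs ξ} − 1) min{1, e^{c ξ}}] < 0. -/
/-!
Pairing `x` with `-x` (allowed by the symmetry of `ξ`) turns the expectation into half the
expectation of `g(ξ) + g(-ξ)`, where `g` is the integrand. For `x > 0` one has
`g(x) + g(-x) = (1 - e^{-c(1-s)x}) (e^{-csx} - 1) < 0`, and `g(0) = 0`, so the paired integrand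
is nonpositive and strictly negative on the non-null event `{ξ > 0}`.
-/

open MeasureTheory Real

theorem integral_comp_lt_zero_of_symmetric {Ω : Type*} [MeasurableSpace Ω] {μ : Measure Ω}
    {ξ : Ω → ℝ} (hξ : Measurable ξ)
    (hsymm : Measure.map ξ μ = Measure.map (fun ω => -ξ ω) μ)
    (hpos : 0 < μ {ω | 0 < ξ ω})
    {f : ℝ → ℝ} (hf : Measurable f) (hint : Integrable (fun ω => f (ξ ω)) μ)
    (hf0 : f 0 ≤ 0) (hpair : ∀ x, 0 < x → f x + f (-x) < 0) :
    ∫ ω, f (ξ ω) ∂μ < 0 := by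
  have hint_map : Integrable f (Measure.map ξ μ) :=
    (integrable_map_measure hf.aestronglyMeasurable hξ.aemeasurable).2 hint
  have hint_neg : Integrable (fun ω => f (-ξ ω)) μ := by
    rw [hsymm] at hint_map
    exact (integrable_map_measure hf.aestronglyMeasurable hξ.neg.aemeasurable).1 hint_map
  have heq : ∫ ω, f (ξ ω) ∂μ = ∫ ω, f (-ξ ω) ∂μ := by
    rw [← integral_map hξ.aemeasurable hf.aestronglyMeasurable, hsymm,
      integral_map (φ := fun ω => -ξ ω) hξ.neg.aemeasurable hf.aestronglyMeasurable]
  have hpair_nonpos : ∀ x, f x + f (-x) ≤ 0 := by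
    intro x
    rcases lt_trichotomy x 0 with hx | rfl | hx
    · simpa [add_comm] using (hpair (-x) (neg_pos.2 hx)).le
    · simpa using hf0
    · exact (hpair x hx).le
  have hsum : 0 < ∫ ω, -(f (ξ ω) + f (-ξ ω)) ∂μ := by
    refine (integral_pos_iff_support_of_nonneg (fun ω => neg_nonneg.2 (hpair_nonpos (ξ ω)))
      (hint.add hint_neg).neg).2 (hpos.trans_le (measure_mono fun ω hω => ?_))
    exact neg_ne_zero.2 (hpair (ξ ω) hω).ne
  rw [integral_neg, integral_add hint hint_neg, ← heq] at hsum
  linarith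

noncomputable def driftIntegrand (s c x : ℝ) : ℝ :=
  (exp (-c * s * x) - 1) * min 1 (exp (c * x))

theorem continuous_driftIntegrand (s c : ℝ) : Continuous (driftIntegrand s c) := by
  unfold driftIntegrand
  fun_prop

theorem abs_driftIntegrand_le_one {s c : ℝ} (hs : s ∈ Set.Icc (0 : ℝ) 1) (hc : 0 ≤ c)
    (x : ℝ) : |driftIntegrand s c x| ≤ 1 := by
  obtain ⟨hs0, hs1⟩ := hs
  unfold driftIntegrand
  rcases le_total 0 x with hx | hx
  · rw [min_eq_left (one_le_exp (by positivity)), mul_one, abs_le]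
    have : exp (-c * s * x) ≤ 1 := exp_le_one_iff.2 (by nlinarith [mul_nonneg hc hs0])
    constructor <;> linarith [exp_pos (-c * s * x)]
  · rw [min_eq_right (exp_le_one_iff.2 (by nlinarith)), sub_mul, one_mul, ← exp_add]
    refine abs_sub_le_of_nonneg_of_le (exp_pos _).le (exp_le_one_iff.2 ?_) (exp_pos _).le
      (exp_le_one_iff.2 (by nlinarith))
    nlinarith [mul_nonneg hc (sub_nonneg.2 hs1)]

theorem driftIntegrand_add_neg {s c x : ℝ} (hc : 0 ≤ c) (hx : 0 ≤ x) :
    driftIntegrand s c x + driftIntegrand s c (-x)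
      = (1 - exp (-c * (1 - s) * x)) * (exp (-c * s * x) - 1) := by
  unfold driftIntegrand
  rw [min_eq_left (one_le_exp (by positivity)),
    min_eq_right (exp_le_one_iff.2 (by nlinarith))]
  have h₁ : exp (-c * s * -x) * exp (c * -x) = exp (-c * (1 - s) * x) := by
    rw [← exp_add]; ring_nf
  have h₂ : exp (-c * (1 - s) * x) * exp (-c * s * x) = exp (c * -x) := by
    rw [← exp_add]; ring_nf
  linear_combination h₁ + h₂

theorem driftIntegrand_add_neg_lt_zero {s c x : ℝ} (hs : s ∈ Set.Ioo (0 : ℝ) 1) (hc : 0 < c)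
    (hx : 0 < x) : driftIntegrand s c x + driftIntegrand s c (-x) < 0 := by
  obtain ⟨hs0, hs1⟩ := hs
  rw [driftIntegrand_add_neg hc.le hx.le]
  refine mul_neg_of_pos_of_neg (sub_pos.2 (exp_lt_one_iff.2 ?_)) (sub_neg.2 (exp_lt_one_iff.2 ?_))
  · nlinarith [mul_pos hc (sub_pos.2 hs1)]
  · nlinarith [mul_pos hc hs0]

/-- If `ξ` is a real random variable with law symmetric about `0` and `P(ξ > 0) > 0`,
and `s ∈ (0,1)`, `c > 0`, then `E[(e^{-csξ} − 1) min{1, e^{cξ}}] < 0`. -/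
theorem drift_expectation_neg
    {Ω : Type*} [MeasurableSpace Ω] (μ : Measure Ω) [IsProbabilityMeasure μ]
    (ξ : Ω → ℝ) (hξ : Measurable ξ)
    (hsymm : Measure.map ξ μ = Measure.map (fun ω => -ξ ω) μ)
    (hpos : 0 < μ {ω | 0 < ξ ω})
    (s c : ℝ) (hs : s ∈ Set.Ioo (0:ℝ) 1) (hc : 0 < c) :
    ∫ ω, (Real.exp (-c * s * ξ ω) - 1) * min 1 (Real.exp (c * ξ ω)) ∂μ < 0 := by
  have hcont := continuous_driftIntegrand s c
  have hint : Integrable (fun ω => driftIntegrand s c (ξ ω)) μ :=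
    Integrable.of_bound (hcont.measurable.comp hξ).aestronglyMeasurable 1
      (ae_of_all _ fun ω => abs_driftIntegrand_le_one (Set.Ioo_subset_Icc_self hs) hc.le (ξ ω))
  exact integral_comp_lt_zero_of_symmetric hξ hsymm hpos hcont.measurable hint
    (by simp [driftIntegrand]) fun x hx => driftIntegrand_add_neg_lt_zero hs hc hx
end

section
/- Let π : ℝ^d → (0,∞) be differentiable and satisfy the curvature condition limsup_{‖x‖→∞} ⟨x/‖x‖, ∇log π(x)/‖∇log π(x)‖⟩ < −2ε for some ε ∈ (0,1), valid for ‖x‖ ≥ M. Define W(x) = {x − t‖x‖ξ : 0 ≤ t ≤ ε²/4, ξ ∈ S^{d-1}, ‖ξ − x/‖x‖‖ ≤ ε}. Then for all x with ‖x‖ ≥ 2M and all y ∈ W(x) with y ≠ x, log(π(y)/π(x)) > 0. -/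
/-!
A point `z = x - s • ξ` of the segment from `x` to `y` has `‖z‖ ≥ (1 - ε²/4)‖x‖ ≥ M`, and its
direction differs from `x/‖x‖` by at most `2s/‖x‖ ≤ ε²/2 ≤ ε`, hence from `ξ` by at most `2ε`.
The curvature condition at `z` then makes `⟨ξ, ∇log π(z)⟩` negative, so `log π` strictly
increases along the segment from `x` to `y`.
-/

open MeasureTheory
open NormedSpace

/-- The cone-segment region `W(x) = {x − t‖x‖ξ : 0 ≤ t ≤ ε²/4, ‖ξ‖ = 1, ‖ξ − x/‖x‖‖ ≤ ε}`. -/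
def coneRegion {d : ℕ} (ε : ℝ) (x : EuclideanSpace ℝ (Fin d)) :
    Set (EuclideanSpace ℝ (Fin d)) :=
  {y | ∃ (t : ℝ) (ξ : EuclideanSpace ℝ (Fin d)), 0 ≤ t ∧ t ≤ ε ^ 2 / 4 ∧ ‖ξ‖ = 1 ∧
        ‖ξ - ‖x‖⁻¹ • x‖ ≤ ε ∧ y = x - (t * ‖x‖) • ξ}

section Normalize

variable {V : Type*} [NormedAddCommGroup V] [NormedSpace ℝ V]

theorem NormedSpace.norm_normalize_le (x : V) : ‖normalize x‖ ≤ 1 := by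
  by_cases hx : x = 0
  · simp [hx]
  · exact (norm_normalize hx).le

theorem NormedSpace.norm_normalize_sub_normalize_le {x : V} (hx : x ≠ 0) (y : V) :
    ‖normalize x - normalize y‖ ≤ 2 * ‖x - y‖ / ‖x‖ := by
  have hx0 : 0 < ‖x‖ := norm_pos_iff.2 hx
  have hsplit : normalize x - normalize y = ‖x‖⁻¹ • ((x - y) + (‖y‖ - ‖x‖) • normalize y) := by
    rw [smul_add, smul_sub, smul_smul, mul_sub, sub_smul, inv_mul_cancel₀ hx0.ne', one_smul,
      mul_smul, norm_smul_normalize, normalize]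
    abel
  have hyx : |‖y‖ - ‖x‖| ≤ ‖x - y‖ := by rw [norm_sub_rev]; exact abs_norm_sub_norm_le y x
  calc ‖normalize x - normalize y‖ = ‖x‖⁻¹ * ‖(x - y) + (‖y‖ - ‖x‖) • normalize y‖ := by
        rw [hsplit, norm_smul, norm_inv, norm_norm]
    _ ≤ ‖x‖⁻¹ * (‖x - y‖ + ‖x - y‖ * 1) := by
        gcongr
        refine (norm_add_le _ _).trans ?_
        rw [norm_smul, Real.norm_eq_abs]
        gcongr
        exact norm_normalize_le y
    _ = 2 * ‖x - y‖ / ‖x‖ := by ring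

theorem NormedSpace.norm_normalize_sub_normalize_sub_smul_le {x ξ : V} (hx : x ≠ 0)
    (hξ : ‖ξ‖ = 1) {s : ℝ} (hs : 0 ≤ s) :
    ‖normalize x - normalize (x - s • ξ)‖ ≤ 2 * s / ‖x‖ := by
  simpa [norm_smul, hξ, abs_of_nonneg hs] using norm_normalize_sub_normalize_le hx (x - s • ξ)

end Normalize

section Gradient

variable {F : Type*} [NormedAddCommGroup F] [InnerProductSpace ℝ F]

theorem real_inner_neg_of_norm_sub_le_of_inner_normalize_lt {ξ v g : F} {δ : ℝ}
    (hξ : ‖ξ - v‖ ≤ δ) (hv : inner ℝ v (normalize g) < -δ) : inner ℝ ξ g < 0 := by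
  have hg : g ≠ 0 := by
    rintro rfl
    simp only [normalize_zero_eq_zero, inner_zero_right] at hv
    linarith [norm_nonneg (ξ - v)]
  have hξg : inner ℝ ξ (normalize g) < 0 :=
    calc inner ℝ ξ (normalize g) = inner ℝ (ξ - v) (normalize g) + inner ℝ v (normalize g) := by
          rw [inner_sub_left]; ring
      _ ≤ ‖ξ - v‖ * ‖normalize g‖ + inner ℝ v (normalize g) := by
          gcongr; exact real_inner_le_norm _ _
      _ < 0 := by rw [norm_normalize hg]; linarith
  have hscale := real_inner_smul_right ξ (normalize g) ‖g‖
  rw [norm_smul_normalize] at hscale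
  rw [hscale]
  exact mul_neg_of_pos_of_neg (norm_pos_iff.2 hg) hξg

theorem lt_apply_sub_smul_of_inner_gradient_neg [CompleteSpace F] {f : F → ℝ}
    (hf : Differentiable ℝ f) {x ξ : F} {r : ℝ} (hr : 0 < r)
    (h : ∀ s ∈ Set.Ioo 0 r, inner ℝ ξ (gradient f (x - s • ξ)) < 0) :
    f x < f (x - r • ξ) := by
  have hderiv : ∀ s : ℝ,
      HasDerivAt (fun s : ℝ => f (x - s • ξ)) (-inner ℝ ξ (gradient f (x - s • ξ))) s := by
    intro s
    have hline : HasDerivAt (fun s : ℝ => x - s • ξ) (-ξ) s := by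
      simpa using ((hasDerivAt_id s).smul_const ξ).const_sub x
    have := (hf _).hasGradientAt.hasFDerivAt.comp_hasDerivAt s hline
    rwa [InnerProductSpace.toDual_apply_apply, inner_neg_right, real_inner_comm] at this
  have hmono : StrictMonoOn (fun s : ℝ => f (x - s • ξ)) (Set.Icc 0 r) :=
    strictMonoOn_of_hasDerivWithinAt_pos (convex_Icc 0 r)
      (fun s _ => (hderiv s).continuousAt.continuousWithinAt)
      (fun s _ => (hderiv s).hasDerivWithinAt)
      (fun s hs => neg_pos.2 (h s (by rwa [interior_Icc] at hs)))
  simpa using hmono (Set.left_mem_Icc.2 hr.le) (Set.right_mem_Icc.2 hr.le) hr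

end Gradient

theorem log_ratio_pos_on_coneRegion_general
    {d : ℕ}
    (π : EuclideanSpace ℝ (Fin d) → ℝ) (hπpos : ∀ x, 0 < π x)
    (hdiff : ∀ x, DifferentiableAt ℝ (fun y => Real.log (π y)) x)
    (ε M : ℝ) (hε : ε ∈ Set.Ioo (0:ℝ) 1)
    (hcurv : ∀ x : EuclideanSpace ℝ (Fin d), M ≤ ‖x‖ →
      (inner ℝ (‖x‖⁻¹ • x)
        (‖gradient (fun y => Real.log (π y)) x‖⁻¹ •
          gradient (fun y => Real.log (π y)) x) : ℝ) < -2 * ε) :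
    ∀ x : EuclideanSpace ℝ (Fin d), 2 * M ≤ ‖x‖ →
      ∀ y ∈ coneRegion ε x, y ≠ x → 0 < Real.log (π y / π x) := by
  obtain ⟨hε0, hε1⟩ := hε
  rintro x hx _ ⟨t, ξ, ht0, htε, hξ, hξx, rfl⟩ hyx
  have htx : 0 < t * ‖x‖ :=
    (by positivity : 0 ≤ t * ‖x‖).lt_of_ne fun h => hyx (by rw [← h, zero_smul, sub_zero])
  have hx0 : x ≠ 0 := norm_pos_iff.1 (pos_of_mul_pos_right htx ht0)
  rw [Real.log_div (hπpos _).ne' (hπpos _).ne', sub_pos]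
  refine lt_apply_sub_smul_of_inner_gradient_neg hdiff htx fun s hs => ?_
  have hsx : s ≤ ε ^ 2 / 4 * ‖x‖ := hs.2.le.trans (by gcongr)
  have hε2 : ε ^ 2 ≤ ε := by nlinarith
  have hzM : M ≤ ‖x - s • ξ‖ := by
    have := norm_sub_norm_le x (s • ξ)
    rw [norm_smul, hξ, mul_one, Real.norm_of_nonneg hs.1.le] at this
    nlinarith
  have hdir : ‖normalize x - normalize (x - s • ξ)‖ ≤ ε :=
    (norm_normalize_sub_normalize_sub_smul_le hx0 hξ hs.1.le).trans
      (by rw [div_le_iff₀ (norm_pos_iff.2 hx0)]; nlinarith [norm_nonneg x])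
  have hξx' : ‖ξ - normalize x‖ ≤ ε := hξx
  refine real_inner_neg_of_norm_sub_le_of_inner_normalize_lt (δ := 2 * ε) ?_
    (by rw [← neg_mul]; exact hcurv _ hzM)
  calc ‖ξ - normalize (x - s • ξ)‖
      ≤ ‖ξ - normalize x‖ + ‖normalize x - normalize (x - s • ξ)‖ :=
        norm_sub_le_norm_sub_add_norm_sub _ _ _
    _ ≤ 2 * ε := by linarith

/-- Under the curvature condition `⟨x/‖x‖, ∇log π(x)/‖∇log π(x)‖⟩ < −2ε` for `‖x‖ ≥ M`,
every `y ∈ W(x)` with `y ≠ x` and `‖x‖ ≥ 2M` satisfies `log(π(y)/π(x)) > 0`. -/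
theorem log_ratio_pos_on_coneRegion
    {d : ℕ} (hd : 2 ≤ d)
    (π : EuclideanSpace ℝ (Fin d) → ℝ) (hπpos : ∀ x, 0 < π x)
    (hdiff : ∀ x, DifferentiableAt ℝ (fun y => Real.log (π y)) x)
    (ε M : ℝ) (hε : ε ∈ Set.Ioo (0:ℝ) 1) (hM : 0 < M)
    (hcurv : ∀ x : EuclideanSpace ℝ (Fin d), M ≤ ‖x‖ →
      (inner ℝ (‖x‖⁻¹ • x)
        (‖gradient (fun y => Real.log (π y)) x‖⁻¹ •
          gradient (fun y => Real.log (π y)) x) : ℝ) < -2 * ε) :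
    ∀ x : EuclideanSpace ℝ (Fin d), 2 * M ≤ ‖x‖ →
      ∀ y ∈ coneRegion ε x, y ≠ x → 0 < Real.log (π y / π x) :=
  log_ratio_pos_on_coneRegion_general π hπpos hdiff ε M hε hcurv
end

section
/- Let x = x₀ − t‖x₀‖ξ where ‖ξ‖ = 1, ‖ξ − x₀/‖x₀‖‖ ≤ ε, and 0 ≤ t ≤ ε²/4 < 1, with x₀ ≠ 0. Then ‖x₀/‖x₀‖ − x/‖x‖‖² ≤ 4t/(1+t) ≤ ε² and ‖x‖ ≥ (1−t)‖x₀‖. -/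
open scoped RealInnerProductSpace


/-- Let `x = x₀ − t‖x₀‖ξ` with `‖ξ‖ = 1`, `‖ξ − x₀/‖x₀‖‖ ≤ ε`, `0 ≤ t ≤ ε²/4 < 1` and
`x₀ ≠ 0`. Then `‖x₀/‖x₀‖ − x/‖x‖‖² ≤ 4t/(1+t) ≤ ε²` and `‖x‖ ≥ (1−t)‖x₀‖`. -/
theorem perturbed_direction_estimate
    {d : ℕ} (x₀ ξ x : EuclideanSpace ℝ (Fin d)) (hx₀ : x₀ ≠ 0)
    (ε t : ℝ) (hε : ε ∈ Set.Ioo (0:ℝ) 1)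
    (hξ : ‖ξ‖ = 1) (hξx : ‖ξ - ‖x₀‖⁻¹ • x₀‖ ≤ ε)
    (ht0 : 0 ≤ t) (ht : t ≤ ε ^ 2 / 4)
    (hx : x = x₀ - (t * ‖x₀‖) • ξ) :
    ‖(‖x₀‖⁻¹ • x₀) - (‖x‖⁻¹ • x)‖ ^ 2 ≤ 4 * t / (1 + t) ∧
    4 * t / (1 + t) ≤ ε ^ 2 ∧
    (1 - t) * ‖x₀‖ ≤ ‖x‖ := by
  obtain ⟨hε0, hε1⟩ := hε
  have ht1 : t < 1 := by nlinarith
  have hx0 : (0:ℝ) < ‖x₀‖ := norm_pos_iff.mpr hx₀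
  set n : EuclideanSpace ℝ (Fin d) := ‖x₀‖⁻¹ • x₀ with hn
  clear_value n
  have hn1 : ‖n‖ = 1 := by
    rw [hn, norm_smul, norm_inv, norm_norm, inv_mul_cancel₀ hx0.ne']
  have hxn : x = ‖x₀‖ • (n - t • ξ) := by
    rw [hx, hn, smul_sub, smul_smul, mul_inv_cancel₀ hx0.ne', one_smul, smul_smul,
      mul_comm t ‖x₀‖]
  set s := ‖n - t • ξ‖ with hs
  clear_value s
  have hts : ‖t • ξ‖ = t := by rw [norm_smul, hξ, mul_one, Real.norm_of_nonneg ht0]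
  have hs_le : s ≤ 1 + t := by
    rw [hs]
    calc ‖n - t • ξ‖ ≤ ‖n‖ + ‖t • ξ‖ := norm_sub_le _ _
    _ = 1 + t := by rw [hn1, hts]
  have hs_ge : 1 - t ≤ s := by
    have h := norm_sub_norm_le n (t • ξ)
    rw [hn1, hts] at h; rw [hs]; exact h
  have hs_pos : 0 < s := lt_of_lt_of_le (by linarith) hs_ge
  have hnormx : ‖x‖ = ‖x₀‖ * s := by
    rw [hxn, norm_smul, Real.norm_of_nonneg hx0.le, ← hs]
  have hxdir : ‖x‖⁻¹ • x = s⁻¹ • (n - t • ξ) := by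
    rw [hnormx, hxn, smul_smul]
    congr 1
    field_simp
  have hc_le : ⟪n, ξ⟫ ≤ 1 := by
    have := real_inner_le_norm n ξ
    rwa [hn1, hξ, one_mul] at this
  have hsq : ‖n - ‖x‖⁻¹ • x‖ ^ 2 = 2 - 2 * (s⁻¹ * (1 - t * ⟪n, ξ⟫)) := by
    rw [hxdir]
    have h1 : ‖n - s⁻¹ • (n - t • ξ)‖ ^ 2 =
        ‖n‖ ^ 2 - 2 * ⟪n, s⁻¹ • (n - t • ξ)⟫ + ‖s⁻¹ • (n - t • ξ)‖ ^ 2 := by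
      rw [@norm_sub_sq_real]
    rw [h1, hn1, norm_smul, norm_inv, Real.norm_of_nonneg hs_pos.le, ← hs,
      inv_mul_cancel₀ hs_pos.ne', inner_smul_right, inner_sub_right, inner_smul_right,
      real_inner_self_eq_norm_sq, hn1]
    ring
  have key : ‖n - ‖x‖⁻¹ • x‖ ^ 2 ≤ 4 * t / (1 + t) := by
    rw [hsq, le_div_iff₀ (by linarith : (0:ℝ) < 1 + t)]
    have hinv : s * s⁻¹ = 1 := mul_inv_cancel₀ hs_pos.ne'
    have hsi : 0 < s⁻¹ := inv_pos.mpr hs_pos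
    nlinarith [mul_nonneg hsi.le (sub_nonneg.mpr hc_le),
      mul_nonneg (mul_nonneg hsi.le ht0) (sub_nonneg.mpr hc_le),
      mul_nonneg (mul_nonneg hsi.le (by linarith : (0:ℝ) ≤ 1 - t)) (sub_nonneg.mpr hs_le)]
  refine ⟨key, ?_, ?_⟩
  · rw [div_le_iff₀ (by linarith : (0:ℝ) < 1 + t)]
    nlinarith
  · rw [hnormx]
    nlinarith
end
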